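/- Define u(κ,λ) := λ + (κ − 4 + √((κ − 4)² + 16κλ))/(2κ) for κ > 4 and λ ≥ 0 (the one-sided crossing exponent of SLE(κ)). Then the sequence defined by v₁ = 1/3 and v_k = u(6, v_{k−1}) for k ≥ 2 satisfies v_k = k(k+1)/6 for every integer k ≥ 1. Consequently the probability g_k⁺(L) that an SLE(6) trace crossing the rectangle (0,L) × (0,iπ) makes k horizontal crossings before hitting the bottom edge decays like exp(−k(k+1)L/6), giving the half-plane k-arm percolation exponent k(k+1)/6. -/
import Mathlib


open Set Filter

/-- The one-sided crossing exponent `u(κ,λ) = λ + (κ−4+√((κ−4)²+16κλ))/(2κ)` of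
chordal SLE(κ). -/
noncomputable def oneSidedCrossingExponent (κ lam : ℝ) : ℝ :=
  lam + (κ - 4 + Real.sqrt ((κ - 4) ^ 2 + 16 * κ * lam)) / (2 * κ)

/-- The half-plane multi-arm percolation exponents: the recursion `v₁ = 1/3`,
`v_k = u(6, v_{k−1})` has solution `v_k = k(k+1)/6` for all `k ≥ 1`. -/
theorem halfplane_arm_exponents (v : ℕ → ℝ) (h1 : v 1 = 1 / 3)
    (hrec : ∀ k : ℕ, 2 ≤ k → v k = oneSidedCrossingExponent 6 (v (k - 1))) :
    ∀ k : ℕ, 1 ≤ k → v k = (k : ℝ) * ((k : ℝ) + 1) / 6 := by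
  intro k hk
  induction k with
  | zero => omega
  | succ n ih =>
    rcases Nat.eq_or_lt_of_le hk with h | h
    · simp [← h, h1]; norm_num
    · have hn : 1 ≤ n := by omega
      have h2 : 2 ≤ n + 1 := by omega
      have hv := hrec (n + 1) h2
      simp only [Nat.add_sub_cancel] at hv
      rw [hv, ih hn, oneSidedCrossingExponent]
      have hsqrt : Real.sqrt ((6 - 4) ^ 2 + 16 * 6 * ((n : ℝ) * ((n : ℝ) + 1) / 6))
          = 4 * (n : ℝ) + 2 := by
        rw [show (6 - 4 : ℝ) ^ 2 + 16 * 6 * ((n : ℝ) * ((n : ℝ) + 1) / 6)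
            = (4 * (n : ℝ) + 2) ^ 2 by ring]
        exact Real.sqrt_sq (by positivity)
      rw [hsqrt]
      push_cast
      ring
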